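/- arXiv:2312.09208 — 8 statements merged into one kernel-verified Lean document; each statement's English description precedes it below -/
import Mathlib

section
/- (Clark–Suen) For any pair of finite simple graphs X and Y, γ(X □ Y) ≥ (1/2)·γ(X)·γ(Y). -/
open SimpleGraph

/-- `S` is a dominating set of `G`: every vertex is in `S` or adjacent to a member of `S`. -/
def IsDomSet {V : Type*} (G : SimpleGraph V) (S : Set V) : Prop :=
  ∀ v, v ∈ S ∨ ∃ u ∈ S, G.Adj u v

/-- The domination number of a finite graph. -/
noncomputable def domNum {V : Type*} [Fintype V] (G : SimpleGraph V) : ℕ :=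
  sInf {n | ∃ S : Finset V, S.card = n ∧ IsDomSet G ↑S}

/-!
Let `D` be a minimum dominating set of `X □ Y` and `H` one of `Y`. Split `V(Y)` into cells,
one per vertex `i ∈ H`, each cell consisting of vertices dominated by `i`. For a fixed cell, the
`X`-projection of the part of `D` lying over that cell, together with the vertices `g` of `X` whose
column `{g} × cell` is dominated from within the `g`-column of `D`, dominates `X`. Summing over
the cells, the projections cost at most `|D|` in total. A vertex `g` of `X` that is good for `k`
cells can trade those `k` vertices of `H` for the `g`-column of `D` in a dominating set of `Y`,
so minimality of `H` makes `k` at most the size of that column; summing over `g`, the good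
vertices also cost at most `|D|`. Hence `γ(X) γ(Y) ≤ 2 γ(X □ Y)`.
-/

open Finset

section Domination

variable {V : Type*}

def Dominates (G : SimpleGraph V) (S : Set V) (v : V) : Prop :=
  v ∈ S ∨ ∃ u ∈ S, G.Adj u v

theorem Dominates.mono {G : SimpleGraph V} {S T : Set V} {v : V} (hST : S ⊆ T)
    (h : Dominates G S v) : Dominates G T v := by
  rcases h with hv | ⟨u, hu, huv⟩
  exacts [Or.inl (hST hv), Or.inr ⟨u, hST hu, huv⟩]

theorem IsDomSet.exists_dominator {G : SimpleGraph V} {S : Set V} (hS : IsDomSet G S) :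
    ∃ f : V → V, ∀ v, f v ∈ S ∧ (f v = v ∨ G.Adj (f v) v) := by
  have (v : V) : ∃ u, u ∈ S ∧ (u = v ∨ G.Adj u v) := by
    rcases hS v with hv | ⟨u, hu, huv⟩
    exacts [⟨v, hv, Or.inl rfl⟩, ⟨u, hu, Or.inr huv⟩]
  choose f hf using this
  exact ⟨f, hf⟩

variable [Fintype V] {G : SimpleGraph V}

theorem domNum_le_card {S : Finset V} (hS : IsDomSet G ↑S) : domNum G ≤ #S :=
  Nat.sInf_le ⟨S, rfl, hS⟩

theorem exists_isDomSet_card_eq_domNum (G : SimpleGraph V) :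
    ∃ S : Finset V, #S = domNum G ∧ IsDomSet G ↑S :=
  Nat.sInf_mem (s := {n | ∃ S : Finset V, #S = n ∧ IsDomSet G ↑S})
    ⟨_, univ, rfl, fun v => Or.inl (mem_univ v)⟩

end Domination

noncomputable section BoxProd

open Classical

variable {VX VY : Type*} {X : SimpleGraph VX} {Y : SimpleGraph VY} (D : Finset (VX × VY))
  (f : VY → VY)

def column (g : VX) : Finset VY := {p ∈ D | p.1 = g}.image Prod.snd

def cellProjection (i : VY) : Finset VX := {p ∈ D | f p.2 = i}.image Prod.fst

def ColumnDominatesCell (Y : SimpleGraph VY) (g : VX) (i : VY) : Prop :=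
  ∀ h, f h = i → Dominates Y ↑(column D g) h

theorem mem_column {g : VX} {h : VY} (hgh : (g, h) ∈ D) : h ∈ column D g :=
  mem_image.2 ⟨(g, h), mem_filter.2 ⟨hgh, rfl⟩, rfl⟩

theorem card_column_le (g : VX) : #(column D g) ≤ #{p ∈ D | p.1 = g} :=
  card_image_le

theorem sum_card_cellProjection_le {H : Finset VY} (hf : ∀ h, f h ∈ H) :
    ∑ i ∈ H, #(cellProjection D f i) ≤ #D := by
  rw [card_eq_sum_card_fiberwise (f := fun p => f p.2) (t := H) fun p _ => hf p.2]
  exact sum_le_sum fun i _ => card_image_le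

variable {f} {H : Finset VY}

/-- The exchange step: cells that are good for `g` can be dominated by the `g`-column of `D`
instead of by their vertex of `H`. -/
theorem isDomSet_column_union_sdiff (hf : ∀ h, f h ∈ H ∧ (f h = h ∨ Y.Adj (f h) h)) (g : VX) :
    IsDomSet Y ↑(column D g ∪ (H \ {i ∈ H | ColumnDominatesCell D f Y g i})) := by
  intro h
  rw [coe_union]
  by_cases hg : ColumnDominatesCell D f Y g (f h)
  · exact (hg h rfl).mono Set.subset_union_left
  · have hfh : f h ∈ H \ {i ∈ H | ColumnDominatesCell D f Y g i} := by simp [(hf h).1, hg]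
    apply Dominates.mono Set.subset_union_right
    rcases (hf h).2 with heq | hadj
    exacts [Or.inl (heq ▸ hfh), Or.inr ⟨f h, hfh, hadj⟩]

theorem card_filter_columnDominatesCell_le [Fintype VY] (hH : #H ≤ domNum Y)
    (hf : ∀ h, f h ∈ H ∧ (f h = h ∨ Y.Adj (f h) h)) (g : VX) :
    #{i ∈ H | ColumnDominatesCell D f Y g i} ≤ #(column D g) := by
  have hle := (domNum_le_card (isDomSet_column_union_sdiff D hf g)).trans (card_union_le _ _)
  rw [card_sdiff_of_subset (filter_subset _ _)] at hle
  have : #{i ∈ H | ColumnDominatesCell D f Y g i} ≤ #H := card_le_card (filter_subset _ _)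
  omega

variable [Fintype VX]

theorem sum_card_column_le : ∑ g, #(column D g) ≤ #D := by
  rw [card_eq_sum_card_fiberwise (f := Prod.fst) (t := univ) fun p _ => mem_coe.2 (mem_univ _)]
  exact sum_le_sum fun g _ => card_column_le D g

variable (f) in
theorem isDomSet_cellProjection_union (hD : IsDomSet (X □ Y) ↑D) (i : VY) :
    IsDomSet X ↑(cellProjection D f i ∪ ({g | ColumnDominatesCell D f Y g i} : Finset VX)) := by
  intro g
  simp only [coe_union, coe_filter, mem_univ, true_and, Set.mem_union, Set.mem_ofPred_eq]
  by_cases hg : ColumnDominatesCell D f Y g i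
  · exact Or.inl (Or.inr hg)
  obtain ⟨h, hfh, hgh⟩ : ∃ h, f h = i ∧ ¬Dominates Y ↑(column D g) h := by
    simpa [ColumnDominatesCell] using hg
  rcases hD (g, h) with hmem | ⟨⟨g', h'⟩, hu, hadj⟩
  · exact absurd (Or.inl (mem_column D hmem)) hgh
  rcases boxProd_adj.1 hadj with ⟨hX, rfl⟩ | ⟨hY, rfl⟩
  · exact Or.inr ⟨g', Or.inl (mem_image.2 ⟨_, mem_filter.2 ⟨hu, hfh⟩, rfl⟩), hX⟩
  · exact absurd (Or.inr ⟨h', mem_column D hu, hY⟩) hgh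

theorem sum_card_columnDominatesCell_le [Fintype VY] (hH : #H ≤ domNum Y)
    (hf : ∀ h, f h ∈ H ∧ (f h = h ∨ Y.Adj (f h) h)) :
    ∑ i ∈ H, #{g | ColumnDominatesCell D f Y g i} ≤ #D := calc
  _ = ∑ g, #{i ∈ H | ColumnDominatesCell D f Y g i} :=
    sum_card_bipartiteAbove_eq_sum_card_bipartiteBelow fun i g => ColumnDominatesCell D f Y g i
  _ ≤ ∑ g, #(column D g) := sum_le_sum fun g _ => card_filter_columnDominatesCell_le D hH hf g
  _ ≤ #D := sum_card_column_le D

end BoxProd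

theorem domNum_mul_domNum_le_two_mul_domNum_boxProd {VX VY : Type*} [Fintype VX] [Fintype VY]
    (X : SimpleGraph VX) (Y : SimpleGraph VY) :
    domNum X * domNum Y ≤ 2 * domNum (X □ Y) := by
  classical
  obtain ⟨D, hDcard, hD⟩ := exists_isDomSet_card_eq_domNum (X □ Y)
  obtain ⟨H, hHcard, hH⟩ := exists_isDomSet_card_eq_domNum Y
  obtain ⟨f, hf⟩ := hH.exists_dominator
  have hcell (i : VY) :
      domNum X ≤ #(cellProjection D f i) + #{g | ColumnDominatesCell D f Y g i} :=
    (domNum_le_card (isDomSet_cellProjection_union D f hD i)).trans (card_union_le _ _)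
  calc domNum X * domNum Y = ∑ _i ∈ H, domNum X := by rw [sum_const, smul_eq_mul, hHcard, mul_comm]
    _ ≤ ∑ i ∈ H, (#(cellProjection D f i) + #{g | ColumnDominatesCell D f Y g i}) :=
      sum_le_sum fun i _ => hcell i
    _ ≤ #D + #D := by
      rw [sum_add_distrib]
      exact add_le_add (sum_card_cellProjection_le D f fun h => (hf h).1)
        (sum_card_columnDominatesCell_le D hHcard.le hf)
    _ = 2 * domNum (X □ Y) := by rw [hDcard, two_mul]

/-- Clark–Suen: γ(X □ Y) ≥ (1/2)·γ(X)·γ(Y). -/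
theorem stmt_1 {VX VY : Type*} [Fintype VX] [Fintype VY]
    (X : SimpleGraph VX) (Y : SimpleGraph VY) :
    (domNum (X □ Y) : ℚ) ≥ (1 / 2 : ℚ) * domNum X * domNum Y := by
  have : (domNum X * domNum Y : ℚ) ≤ 2 * domNum (X □ Y) := by
    exact_mod_cast domNum_mul_domNum_le_two_mul_domNum_boxProd X Y
  linarith
end

section
/- For any pair of finite simple graphs X and Y, γ(X □ Y □ P₂) ≥ (2/3)·γ(X)·γ(Y). -/
open SimpleGraph Finset

section Aux

attribute [local instance] Classical.propDecidable

lemma domNum_exists {V : Type*} [Fintype V] (G : SimpleGraph V) :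
    ∃ S : Finset V, S.card = domNum G ∧ IsDomSet G ↑S := by
  have hne : {n | ∃ S : Finset V, S.card = n ∧ IsDomSet G ↑S}.Nonempty :=
    ⟨(univ : Finset V).card, univ, rfl, fun v => Or.inl (by simp)⟩
  exact Nat.sInf_mem hne

lemma domNum_le {V : Type*} [Fintype V] (G : SimpleGraph V) (S : Finset V)
    (hS : IsDomSet G ↑S) : domNum G ≤ S.card :=
  Nat.sInf_le ⟨S, rfl, hS⟩

lemma fin2_filter_card (P : Fin 2 → Prop) :
    (univ.filter P).card = (if ∃ t, P t then 1 else 0) + (if ∀ t, P t then 1 else 0) := by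
  rw [show (univ : Finset (Fin 2)) = {0, 1} by decide]
  by_cases h0 : P 0 <;> by_cases h1 : P 1 <;>
    simp [filter_insert, filter_singleton, Fin.exists_fin_two, Fin.forall_fin_two, h0, h1]

variable {VX VY : Type*} [Fintype VX] [Fintype VY] (X : SimpleGraph VX) (Y : SimpleGraph VY)

/-- `x`'s layer `(y,t)` copy is undominated within its `X`-layer. -/
def Und (D : Finset ((VX × VY) × Fin 2)) (x : VX) (y : VY) (t : Fin 2) : Prop :=
  ∀ d ∈ D, ¬(d.2 = t ∧ d.1.2 = y ∧ (d.1.1 = x ∨ X.Adj d.1.1 x))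

/-- The cell of `a` in layer `(y,t)` contains an in-layer-undominated vertex. -/
def BadP (D : Finset ((VX × VY) × Fin 2)) (p : VX → VX) (a : VX) (y : VY) (t : Fin 2) : Prop :=
  ∃ x, p x = a ∧ Und X D x y t

lemma layer_ineq (D : Finset ((VX × VY) × Fin 2)) (A : Finset VX) (p : VX → VX)
    (hpA : ∀ x, p x ∈ A) (hpd : ∀ x, p x = x ∨ X.Adj (p x) x) (y : VY) (t : Fin 2) :
    domNum X ≤ (D.filter fun d => d.1.2 = y ∧ d.2 = t).card
      + (A.filter fun a => BadP X D p a y t).card := by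
  set S : Finset VX :=
    ((D.filter fun d => d.1.2 = y ∧ d.2 = t).image fun d => d.1.1)
      ∪ (A.filter fun a => BadP X D p a y t) with hS
  have hdom : IsDomSet X ↑S := by
    intro x
    by_cases hb : BadP X D p (p x) y t
    · have hmem : p x ∈ S := by
        rw [hS]
        exact mem_union_right _ (mem_filter.2 ⟨hpA x, hb⟩)
      rcases hpd x with h | h
      · exact Or.inl (by simpa [h] using (mem_coe.2 hmem))
      · exact Or.inr ⟨p x, mem_coe.2 hmem, h⟩
    · have hx : ¬ Und X D x y t := fun h => hb ⟨x, rfl, h⟩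
      simp only [Und, not_forall] at hx
      obtain ⟨d, hdD, hd⟩ := hx
      rw [not_not] at hd
      obtain ⟨ht, hy, hxx⟩ := hd
      have hdS : d.1.1 ∈ S := by
        rw [hS]
        exact mem_union_left _ (mem_image_of_mem _ (mem_filter.2 ⟨hdD, hy, ht⟩))
      rcases hxx with h | h
      · exact Or.inl (by simpa [h] using (mem_coe.2 hdS))
      · exact Or.inr ⟨d.1.1, mem_coe.2 hdS, h⟩
  calc domNum X ≤ S.card := domNum_le X S hdom
    _ ≤ _ := le_trans (card_union_le _ _) (by gcongr; exact card_image_le)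

lemma bad_proj (D : Finset ((VX × VY) × Fin 2)) (p : VX → VX)
    (hDdom : IsDomSet (SimpleGraph.boxProd (SimpleGraph.boxProd X Y) (pathGraph 2)) ↑D) (a : VX) (y : VY) (t : Fin 2)
    (hb : BadP X D p a y t) :
    y ∈ ((D.filter fun d => p d.1.1 = a).image fun d => d.1.2)
      ∨ ∃ q ∈ ((D.filter fun d => p d.1.1 = a).image fun d => d.1.2), Y.Adj q y := by
  obtain ⟨x, hpx, hund⟩ := hb
  rcases hDdom ((x, y), t) with h | ⟨d, hdD, hadj⟩
  · exact absurd (hund _ (mem_coe.1 h)) (by simp)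
  · have hdD : d ∈ D := mem_coe.1 hdD
    rw [boxProd_adj] at hadj
    rcases hadj with ⟨hxy, ht⟩ | ⟨hpt, hfst⟩
    · rw [boxProd_adj] at hxy
      rcases hxy with ⟨hX, hY⟩ | ⟨hY, hX⟩
      · exact absurd (hund d hdD) (by simp [ht, hY, Or.inr hX])
      · refine Or.inr ⟨d.1.2, mem_image_of_mem _ (mem_filter.2 ⟨hdD, by rw [hX, hpx]⟩), hY⟩
    · have h1 : d.1.1 = x := by rw [hfst]
      have h2 : d.1.2 = y := by rw [hfst]
      exact Or.inl (by
        rw [← h2]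
        exact mem_image_of_mem _ (mem_filter.2 ⟨hdD, by rw [h1, hpx]⟩))

lemma fiber_ineq (D : Finset ((VX × VY) × Fin 2)) (p : VX → VX)
    (hDdom : IsDomSet (SimpleGraph.boxProd (SimpleGraph.boxProd X Y) (pathGraph 2)) ↑D) (a : VX) :
    (∑ y, (univ.filter fun t => BadP X D p a y t).card) + 2 * domNum Y
      ≤ 2 * (D.filter fun d => p d.1.1 = a).card + 2 * Fintype.card VY := by
  set Q := (D.filter fun d => p d.1.1 = a).image fun d => d.1.2 with hQ
  set T1 := univ.filter (fun y : VY => ∃ t, BadP X D p a y t) with hT1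
  set T2 := univ.filter (fun y : VY => ∀ t, BadP X D p a y t) with hT2
  have hsum : (∑ y, (univ.filter fun t => BadP X D p a y t).card) = T1.card + T2.card := by
    rw [hT1, hT2, card_filter, card_filter, ← Finset.sum_add_distrib]
    exact Finset.sum_congr rfl fun y _ => fin2_filter_card _
  have hbound : ∀ T : Finset VY, (∀ y ∈ T, ∃ t, BadP X D p a y t) →
      T.card + domNum Y ≤ (D.filter fun d => p d.1.1 = a).card + Fintype.card VY := by
    intro T hT
    have hdom : IsDomSet Y ↑(Q ∪ (univ \ T)) := by
      intro v
      by_cases hv : v ∈ T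
      · obtain ⟨t, hb⟩ := hT v hv
        rcases bad_proj X Y D p hDdom a v t hb with h | ⟨q, hq, hadj⟩
        · exact Or.inl (mem_coe.2 (mem_union_left _ h))
        · exact Or.inr ⟨q, mem_coe.2 (mem_union_left _ hq), hadj⟩
      · exact Or.inl (mem_coe.2 (mem_union_right _ (mem_sdiff.2 ⟨mem_univ v, hv⟩)))
    have h1 : domNum Y ≤ Q.card + (Fintype.card VY - T.card) := calc
      domNum Y ≤ (Q ∪ (univ \ T)).card := domNum_le Y _ hdom
      _ ≤ Q.card + (univ \ T).card := card_union_le _ _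
      _ = Q.card + (Fintype.card VY - T.card) := by rw [card_sdiff_of_subset (subset_univ T), card_univ]
    have h2 : T.card ≤ Fintype.card VY := by
      simpa using card_le_card (subset_univ T)
    have hQc : Q.card ≤ (D.filter fun d => p d.1.1 = a).card := card_image_le
    omega
  have b1 := hbound T1 (fun y hy => (mem_filter.1 hy).2)
  have b2 := hbound T2 (fun y hy => ⟨0, (mem_filter.1 hy).2 0⟩)
  omega
end Aux

/-- γ(X □ Y □ P₂) ≥ (2/3)·γ(X)·γ(Y). -/
theorem stmt_2 {VX VY : Type*} [Fintype VX] [Fintype VY]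
    (X : SimpleGraph VX) (Y : SimpleGraph VY) :
    (domNum (SimpleGraph.boxProd (SimpleGraph.boxProd X Y) (pathGraph 2)) : ℚ) ≥ (2 / 3 : ℚ) * domNum X * domNum Y := by
  classical
  obtain ⟨D, hDcard, hDdom⟩ := domNum_exists (SimpleGraph.boxProd (SimpleGraph.boxProd X Y) (pathGraph 2))
  obtain ⟨A, hAcard, hAdom⟩ := domNum_exists X
  have hp : ∀ x : VX, ∃ a, a ∈ A ∧ (a = x ∨ X.Adj a x) := by
    intro x
    rcases hAdom x with h | ⟨u, hu, hadj⟩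
    · exact ⟨x, by simpa using h, Or.inl rfl⟩
    · exact ⟨u, by simpa using hu, Or.inr hadj⟩
  choose p hpA hpd using hp
  have hpd' : ∀ x, p x = x ∨ X.Adj (p x) x := by
    intro x; rcases hpd x with h | h
    · exact Or.inl h
    · exact Or.inr h
  -- D.card as a sum over layers
  have hDlayers : D.card = ∑ y, ∑ t, (D.filter fun d => d.1.2 = y ∧ d.2 = t).card := by
    rw [Finset.card_eq_sum_card_fiberwise
      (f := fun d : (VX × VY) × Fin 2 => (d.1.2, d.2)) (t := univ) (fun x _ => mem_univ _)]
    rw [Fintype.sum_prod_type]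
    refine Finset.sum_congr rfl fun y _ => Finset.sum_congr rfl fun t _ => ?_
    congr 1
    apply filter_congr
    intro d _
    simp [Prod.ext_iff]
  -- D.card as a sum over fibers of p
  have hDfibers : D.card = ∑ a ∈ A, (D.filter fun d => p d.1.1 = a).card :=
    Finset.card_eq_sum_card_fiberwise (fun d _ => hpA d.1.1)
  -- rearrange the badness count
  have hB : ∑ y, ∑ t, (A.filter fun a => BadP X D p a y t).card
      = ∑ a ∈ A, ∑ y, (univ.filter fun t => BadP X D p a y t).card := by
    simp_rw [card_filter]
    calc ∑ y, ∑ t, ∑ a ∈ A, (if BadP X D p a y t then 1 else 0)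
        = ∑ y, ∑ a ∈ A, ∑ t, (if BadP X D p a y t then 1 else 0) :=
          Finset.sum_congr rfl fun _ _ => Finset.sum_comm
      _ = ∑ a ∈ A, ∑ y, ∑ t, (if BadP X D p a y t then 1 else 0) := Finset.sum_comm
  set B := ∑ a ∈ A, ∑ y, (univ.filter fun t => BadP X D p a y t).card with hBdef
  -- Inequality I: sum the layer inequality over all layers
  have I : Fintype.card VY * (2 * domNum X) ≤ D.card + B := by
    have := Finset.sum_le_sum (s := (univ : Finset VY)) (fun y _ =>
      Finset.sum_le_sum (s := (univ : Finset (Fin 2))) (fun t _ =>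
        layer_ineq X D A p hpA hpd' y t))
    simp only [Finset.sum_add_distrib] at this
    rw [← hDlayers, hB] at this
    simpa [Finset.sum_const, mul_comm] using this
  -- Inequality II: sum the fiber inequality over A
  have II : B + A.card * (2 * domNum Y) ≤ 2 * D.card + A.card * (2 * Fintype.card VY) := by
    have := Finset.sum_le_sum (s := A) (fun a _ => fiber_ineq X Y D p hDdom a)
    simp only [Finset.sum_add_distrib, Finset.sum_const, smul_eq_mul, ← Finset.mul_sum] at this
    rw [← hDfibers] at this
    simpa [mul_comm] using this
  rw [hAcard] at II
  have I' : 2 * (domNum X * Fintype.card VY) ≤ D.card + B := by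
    calc 2 * (domNum X * Fintype.card VY) = Fintype.card VY * (2 * domNum X) := by ring
      _ ≤ D.card + B := I
  have II' : B + 2 * (domNum X * domNum Y)
      ≤ 2 * D.card + 2 * (domNum X * Fintype.card VY) := by
    calc B + 2 * (domNum X * domNum Y) = B + domNum X * (2 * domNum Y) := by ring
      _ ≤ 2 * D.card + domNum X * (2 * Fintype.card VY) := II
      _ = 2 * D.card + 2 * (domNum X * Fintype.card VY) := by ring
  have key : 2 * (domNum X * domNum Y) ≤ 3 * D.card := by
    generalize hq : domNum X * domNum Y = Q at II' ⊢
    generalize hpn : domNum X * Fintype.card VY = P at I' II'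
    omega
  rw [ge_iff_le, ← hDcard]
  have key' : (2 * (domNum X * domNum Y) : ℚ) ≤ 3 * D.card := by exact_mod_cast key
  push_cast at key' ⊢
  linarith
end

section
/- Let X be a graph with minimum dominating set {u₁,…,u_k} and an associated partition {π_i} of V(X) with u_i ∈ π_i ⊆ N[u_i]. Let Y, Z be graphs and D a dominating set of X □ Y □ Z. Let b' be the number of cells π_i^{y,z} that meet D (blue) and r' the number of cells π_i^{y,z} disjoint from D (red), counting only those cells in which every vertex is dominated only within its own X-fiber (i.e., no vertex of the cell is Y-dominated or Z-dominated). Then b' + r' ≤ |D|. -/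
open SimpleGraph

section Cells

variable {VX VY VZ : Type*}

/-- A vertex ((a,b),c) of X □ Y □ Z is Y-dominated by D if some ((a,b′),c) ∈ D with b′ ~ b in Y. -/
def YDominated (Y : SimpleGraph VY) (D : Set ((VX × VY) × VZ)) (v : (VX × VY) × VZ) : Prop :=
  ∃ b, Y.Adj b v.1.2 ∧ ((v.1.1, b), v.2) ∈ D

/-- A vertex ((a,b),c) of X □ Y □ Z is Z-dominated by D if some ((a,b),c′) ∈ D with c′ ~ c in Z. -/
def ZDominated (Z : SimpleGraph VZ) (D : Set ((VX × VY) × VZ)) (v : (VX × VY) × VZ) : Prop :=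
  ∃ c, Z.Adj c v.2 ∧ ((v.1.1, v.1.2), c) ∈ D

/-- The cell π^{y,z} = {((a,y),z) : a ∈ π}. -/
def cell (π : Set VX) (y : VY) (z : VZ) : Set ((VX × VY) × VZ) :=
  {v | v.1.1 ∈ π ∧ v.1.2 = y ∧ v.2 = z}

end Cells
/-- Lemma 3 (weak form): the number of cells none of whose vertices is Y-dominated or
Z-dominated (the blue and red cells) is at most |D|. -/
theorem stmt_9 {VX VY VZ : Type*} [Fintype VX] [Fintype VY] [Fintype VZ]
    (X : SimpleGraph VX) (Y : SimpleGraph VY) (Z : SimpleGraph VZ)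
    (u : Fin (domNum X) → VX) (hu_inj : Function.Injective u)
    (hu_dom : IsDomSet X (Set.range u))
    (π : Fin (domNum X) → Set VX)
    (hπ_mem : ∀ i, u i ∈ π i)
    (hπ_sub : ∀ i, π i ⊆ insert (u i) (X.neighborSet (u i)))
    (hπ_disj : Pairwise fun i j => Disjoint (π i) (π j))
    (hπ_cover : ∀ a, ∃ i, a ∈ π i)
    (D : Set ((VX × VY) × VZ)) (hD : IsDomSet (SimpleGraph.boxProd (SimpleGraph.boxProd X Y) Z) D) :
    Set.ncard {p : Fin (domNum X) × VY × VZ |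
        ∀ v ∈ cell (π p.1) p.2.1 p.2.2, ¬ YDominated Y D v ∧ ¬ ZDominated Z D v} ≤
      D.ncard := by
  classical
  set good : Fin (domNum X) → VY → VZ → Prop := fun i y z =>
    ∀ v ∈ cell (π i) y z, ¬ YDominated Y D v ∧ ¬ ZDominated Z D v with hgood_def
  have hkey : ∀ y z,
      (Finset.univ.filter fun i : Fin (domNum X) => good i y z).card ≤
      (Finset.univ.filter fun a : VX => ((a, y), z) ∈ D).card := by
    intro y z
    set S := Finset.univ.filter fun a : VX => ((a, y), z) ∈ D with hS
    set G := Finset.univ.filter fun i : Fin (domNum X) => good i y z with hG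
    have hfiber : ∀ i ∈ G, ∀ c ∈ π i, c ∈ S ∨ ∃ a ∈ S, X.Adj a c := by
      intro i hi c hc
      have hgood : good i y z := (Finset.mem_filter.mp hi).2
      have hv : (((c, y), z) : (VX × VY) × VZ) ∈ cell (π i) y z := ⟨hc, rfl, rfl⟩
      obtain ⟨hY, hZ⟩ := hgood _ hv
      rcases hD ((c, y), z) with hmem | ⟨⟨⟨wa, wb⟩, wc⟩, hw, hadj⟩
      · left; simp [hS, hmem]
      · rw [boxProd_adj] at hadj
        rcases hadj with ⟨hxy, hz⟩ | ⟨hzadj, hxy⟩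
        · rw [boxProd_adj] at hxy
          have hz' : wc = z := hz
          subst hz'
          rcases hxy with ⟨hx, hy⟩ | ⟨hyadj, hx⟩
          · have hy' : wb = y := hy
            subst hy'
            right
            exact ⟨wa, by simp [hS, hw], hx⟩
          · have hx' : wa = c := hx
            subst hx'
            exact absurd ⟨wb, hyadj, hw⟩ hY
        · have h1 : wa = c := congrArg Prod.fst hxy
          have h2 : wb = y := congrArg Prod.snd hxy
          subst h1; subst h2
          exact absurd ⟨wc, hzadj, hw⟩ hZ
    set T := S ∪ Gᶜ.image u with hT
    have hTdom : IsDomSet X ↑T := by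
      intro a
      obtain ⟨i, hai⟩ := hπ_cover a
      by_cases hiG : i ∈ G
      · rcases hfiber i hiG a hai with h | ⟨s, hs, hadj⟩
        · left; simp [hT, h]
        · right; exact ⟨s, by simp [hT, hs], hadj⟩
      · have hui : u i ∈ (↑T : Set VX) := by
          simp only [hT, Finset.coe_union, Set.mem_union]
          right
          exact_mod_cast Finset.mem_image_of_mem u (Finset.mem_compl.mpr hiG)
        rcases hπ_sub i hai with rfl | hnb
        · left; exact hui
        · right; exact ⟨u i, hui, hnb⟩
    have h1 : domNum X ≤ T.card := Nat.sInf_le ⟨T, rfl, hTdom⟩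
    have h2 : T.card ≤ S.card + Gᶜ.card := by
      calc T.card ≤ S.card + (Gᶜ.image u).card := Finset.card_union_le _ _
        _ ≤ S.card + Gᶜ.card := Nat.add_le_add_left Finset.card_image_le _
    have h3 : Gᶜ.card = domNum X - G.card := by
      rw [Finset.card_compl]; simp
    have h4 : G.card ≤ domNum X := by
      simpa using Finset.card_le_univ G
    omega
  have hA : {p : Fin (domNum X) × VY × VZ |
        ∀ v ∈ cell (π p.1) p.2.1 p.2.2, ¬ YDominated Y D v ∧ ¬ ZDominated Z D v} =
      ↑(Finset.univ.filter fun p : Fin (domNum X) × VY × VZ => good p.1 p.2.1 p.2.2) := by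
    ext p; simp [hgood_def]
  rw [hA, Set.ncard_coe_finset]
  rw [Set.ncard_eq_toFinset_card' D]
  have hAcard : (Finset.univ.filter fun p : Fin (domNum X) × VY × VZ => good p.1 p.2.1 p.2.2).card
      = ∑ yz : VY × VZ, (Finset.univ.filter fun i : Fin (domNum X) => good i yz.1 yz.2).card := by
    rw [Finset.card_eq_sum_card_fiberwise (f := fun p : Fin (domNum X) × VY × VZ => p.2)
      (t := Finset.univ) (fun p _ => Finset.mem_univ p.2)]
    apply Finset.sum_congr rfl
    intro yz _
    refine Finset.card_nbij' (fun p => p.1) (fun i => (i, yz)) ?_ ?_ ?_ ?_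
    · intro p hp
      change _ ∈ Finset.filter _ _ at hp ⊢
      simp only [Finset.mem_filter, Finset.mem_univ, true_and] at hp ⊢
      have := hp.2; rw [← this]; exact hp.1
    · intro i hi
      change _ ∈ Finset.filter _ _ at hi ⊢
      simp only [Finset.mem_filter, Finset.mem_univ, true_and] at hi ⊢
      exact ⟨hi, trivial⟩
    · intro p hp
      change _ ∈ Finset.filter _ _ at hp
      simp only [Finset.mem_filter, Finset.mem_univ, true_and] at hp
      rw [← hp.2]
    · intro i hi
      rfl
  have hDcard : D.toFinset.card
      = ∑ yz : VY × VZ, (Finset.univ.filter fun a : VX => ((a, yz.1), yz.2) ∈ D).card := by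
    rw [Finset.card_eq_sum_card_fiberwise (f := fun w : (VX × VY) × VZ => (w.1.2, w.2))
      (t := Finset.univ) (fun w _ => Finset.mem_univ _)]
    apply Finset.sum_congr rfl
    intro yz _
    refine Finset.card_nbij' (fun w => w.1.1) (fun a => ((a, yz.1), yz.2)) ?_ ?_ ?_ ?_
    · intro w hw
      change _ ∈ Finset.filter _ _ at hw ⊢
      simp only [Finset.mem_filter, Set.mem_toFinset, Finset.mem_univ, true_and] at hw ⊢
      obtain ⟨hw1, hw2⟩ := hw
      have h1 : w.1.2 = yz.1 := congrArg Prod.fst hw2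
      have h2 : w.2 = yz.2 := congrArg Prod.snd hw2
      have : ((w.1.1, yz.1), yz.2) = w := by
        rw [← h1, ← h2]
      rw [this]; exact hw1
    · intro a ha
      change _ ∈ Finset.filter _ _ at ha ⊢
      simp only [Finset.mem_filter, Set.mem_toFinset, Finset.mem_univ, true_and] at ha ⊢
      exact ⟨ha, trivial⟩
    · intro w hw
      change _ ∈ Finset.filter _ _ at hw
      simp only [Finset.mem_filter, Set.mem_toFinset, Finset.mem_univ, true_and] at hw
      obtain ⟨_, hw2⟩ := hw
      have h1 : w.1.2 = yz.1 := congrArg Prod.fst hw2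
      have h2 : w.2 = yz.2 := congrArg Prod.snd hw2
      rw [← h1, ← h2]
    · intro a ha
      rfl
  rw [hAcard, hDcard]
  exact Finset.sum_le_sum fun yz _ => hkey yz.1 yz.2
end

section
/- Let X, Y be graphs, Z = P₂ with vertices z₁, z₂, and D a dominating set of X □ Y □ P₂. With cells defined from a partition {π_i} of V(X) into closed-neighborhood pieces of a minimum dominating set, suppose a cell π_i^{y,z₁} is disjoint from D, some of its vertices are Y-dominated or Z-dominated, but none of its vertices is Y-dominated (a 'maroon' cell). Then its complement cell π_i^{y,z₂} meets D and none of its vertices is Z-dominated (i.e., it is blue or green). -/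
open SimpleGraph

/-- In X □ Y □ P₂, the complement of a maroon cell is blue or green: if π_i^{y,z₁} is
disjoint from D, has a Y- or Z-dominated vertex, but no Y-dominated vertex, then
π_i^{y,z₂} meets D and has no Z-dominated vertex. -/
theorem stmt_10 {VX VY : Type*} [Fintype VX] [Fintype VY]
    (X : SimpleGraph VX) (Y : SimpleGraph VY)
    (u : Fin (domNum X) → VX) (hu_inj : Function.Injective u)
    (hu_dom : IsDomSet X (Set.range u))
    (π : Fin (domNum X) → Set VX)
    (hπ_mem : ∀ i, u i ∈ π i)
    (hπ_sub : ∀ i, π i ⊆ insert (u i) (X.neighborSet (u i)))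
    (hπ_disj : Pairwise fun i j => Disjoint (π i) (π j))
    (hπ_cover : ∀ a, ∃ i, a ∈ π i)
    (D : Set ((VX × VY) × Fin 2)) (hD : IsDomSet (SimpleGraph.boxProd (SimpleGraph.boxProd X Y) (pathGraph 2)) D)
    (i : Fin (domNum X)) (y : VY) (z₁ z₂ : Fin 2) (hz : z₁ ≠ z₂)
    (h_disjD : D ∩ cell (π i) y z₁ = ∅)
    (h_notred : ∃ v ∈ cell (π i) y z₁,
      YDominated Y D v ∨ ZDominated (pathGraph 2) D v)
    (h_noY : ∀ v ∈ cell (π i) y z₁, ¬ YDominated Y D v) :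
    (D ∩ cell (π i) y z₂).Nonempty ∧
      ∀ v ∈ cell (π i) y z₂, ¬ ZDominated (pathGraph 2) D v := by
  have fin2 : ∀ c : Fin 2, c ≠ z₂ → c = z₁ := by
    intro c hc
    omega
  constructor
  · obtain ⟨v, hv, hYZ⟩ := h_notred
    rcases hYZ with hY | hZ
    · exact absurd hY (h_noY v hv)
    · obtain ⟨c, hadj, hmem⟩ := hZ
      have hcne : c ≠ v.2 := hadj.ne
      rw [hv.2.2] at hcne
      have hc2 : c = z₂ := by
        have := hz
        omega
      refine ⟨((v.1.1, v.1.2), c), hmem, hv.1, hv.2.1, hc2⟩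
  · rintro v ⟨ha, hy, hz2⟩ ⟨c, hadj, hmem⟩
    have hcne : c ≠ v.2 := hadj.ne
    rw [hz2] at hcne
    have hc1 : c = z₁ := fin2 c hcne
    have : ((v.1.1, v.1.2), c) ∈ D ∩ cell (π i) y z₁ := ⟨hmem, ha, hy, hc1⟩
    rw [h_disjD] at this
    exact this
end

section
/- Let D be a dominating set of X □ Y □ P_n, with cells colored as in the paper's construction. In any Z-fiber Z_{i,y} (the sequence of cells π_i^{y,z₁},…,π_i^{y,z_n} along the path P_n), three consecutive cells cannot all be maroon, and the first two cells cannot both be maroon, nor can the last two. -/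
open SimpleGraph

/-- A cell of X □ Y □ P_n is maroon: disjoint from D, has a Y- or Z-dominated vertex,
but no Y-dominated vertex. -/
def MaroonCell {VX VY : Type*} {n : ℕ} (Y : SimpleGraph VY)
    (D : Set ((VX × VY) × Fin n)) (π : Set VX) (y : VY) (z : Fin n) : Prop :=
  D ∩ cell π y z = ∅ ∧
  (∃ v ∈ cell π y z, YDominated Y D v ∨ ZDominated (SimpleGraph.pathGraph n) D v) ∧
  ∀ v ∈ cell π y z, ¬ YDominated Y D v

/-- Observations O₁ and O₂: in any Z-fiber of X □ Y □ P_n, no three consecutive cells are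
all maroon, and neither the first two nor the last two cells are both maroon. -/
theorem stmt_11 {VX VY : Type*} [Fintype VX] [Fintype VY] (n : ℕ)
    (X : SimpleGraph VX) (Y : SimpleGraph VY)
    (u : Fin (domNum X) → VX) (hu_inj : Function.Injective u)
    (hu_dom : IsDomSet X (Set.range u))
    (π : Fin (domNum X) → Set VX)
    (hπ_mem : ∀ i, u i ∈ π i)
    (hπ_sub : ∀ i, π i ⊆ insert (u i) (X.neighborSet (u i)))
    (hπ_disj : Pairwise fun i j => Disjoint (π i) (π j))
    (hπ_cover : ∀ a, ∃ i, a ∈ π i)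
    (D : Set ((VX × VY) × Fin n)) (hD : IsDomSet (SimpleGraph.boxProd (SimpleGraph.boxProd X Y) (pathGraph n)) D)
    (i : Fin (domNum X)) (y : VY) :
    (∀ a b c : Fin n, (b : ℕ) = (a : ℕ) + 1 → (c : ℕ) = (a : ℕ) + 2 →
      ¬ (MaroonCell Y D (π i) y a ∧ MaroonCell Y D (π i) y b ∧ MaroonCell Y D (π i) y c)) ∧
    (∀ a b : Fin n, (a : ℕ) = 0 → (b : ℕ) = 1 →
      ¬ (MaroonCell Y D (π i) y a ∧ MaroonCell Y D (π i) y b)) ∧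
    (∀ a b : Fin n, (a : ℕ) = n - 2 → (b : ℕ) = n - 1 →
      ¬ (MaroonCell Y D (π i) y a ∧ MaroonCell Y D (π i) y b)) := by
  have key : ∀ z : Fin n, MaroonCell Y D (π i) y z →
      ∃ x ∈ π i, ∃ z' : Fin n, ((z' : ℕ) + 1 = (z : ℕ) ∨ (z : ℕ) + 1 = (z' : ℕ)) ∧
        ((x, y), z') ∈ D := by
    rintro z ⟨hdisj, ⟨v, hv, hvd⟩, hnoY⟩
    rcases hvd with hY | hZ
    · exact absurd hY (hnoY v hv)
    · obtain ⟨z', hadj, hmem⟩ := hZ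
      rw [SimpleGraph.pathGraph_adj] at hadj
      refine ⟨v.1.1, hv.1, z', ?_, ?_⟩
      · rcases hadj with h | h
        · exact Or.inl (by rw [← hv.2.2]; exact_mod_cast h)
        · exact Or.inr (by rw [← hv.2.2]; exact_mod_cast h)
      · rw [hv.2.1] at hmem; exact hmem
  have empty : ∀ (z : Fin n) (x : VX), MaroonCell Y D (π i) y z → x ∈ π i →
      ((x, y), z) ∉ D := by
    intro z x hm hx hmem
    have : ((x, y), z) ∈ D ∩ cell (π i) y z := ⟨hmem, hx, rfl, rfl⟩
    rw [hm.1] at this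
    exact this
  refine ⟨?_, ?_, ?_⟩
  · rintro a b c hb hc ⟨hma, hmb, hmc⟩
    obtain ⟨x, hx, z', hz', hmem⟩ := key b hmb
    have hlt := z'.isLt
    rcases hz' with h | h
    · have : z' = a := Fin.ext (by omega)
      exact empty a x hma hx (this ▸ hmem)
    · have : z' = c := Fin.ext (by omega)
      exact empty c x hmc hx (this ▸ hmem)
  · rintro a b ha hb ⟨hma, hmb⟩
    obtain ⟨x, hx, z', hz', hmem⟩ := key a hma
    have hlt := z'.isLt
    rcases hz' with h | h
    · omega
    · have : z' = b := Fin.ext (by omega)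
      exact empty b x hmb hx (this ▸ hmem)
  · rintro a b ha hb ⟨hma, hmb⟩
    obtain ⟨x, hx, z', hz', hmem⟩ := key b hmb
    have hlt := z'.isLt
    have hbn := b.isLt
    rcases hz' with h | h
    · have : z' = a := Fin.ext (by omega)
      exact empty a x hma hx (this ▸ hmem)
    · omega
end

section
/- For any non-negative integer k ≥ 1 and any graphs X, Y, with the cell-coloring associated to a minimum dominating set D of X □ Y □ P_{3k}, the total number m' of maroon cells satisfies m' ≤ 2·γ(X □ Y □ P_{3k}). -/
open SimpleGraph

/-- Lemma 4, case n = 3k: the total number m′ of maroon cells satisfies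
m′ ≤ 2·γ(X □ Y □ P_{3k}). -/
theorem stmt_13 {VX VY : Type*} [Fintype VX] [Fintype VY] (k : ℕ) (hk : 1 ≤ k)
    (X : SimpleGraph VX) (Y : SimpleGraph VY)
    (u : Fin (domNum X) → VX) (hu_inj : Function.Injective u)
    (hu_dom : IsDomSet X (Set.range u))
    (π : Fin (domNum X) → Set VX)
    (hπ_mem : ∀ i, u i ∈ π i)
    (hπ_sub : ∀ i, π i ⊆ insert (u i) (X.neighborSet (u i)))
    (hπ_disj : Pairwise fun i j => Disjoint (π i) (π j))
    (hπ_cover : ∀ a, ∃ i, a ∈ π i)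
    (D : Set ((VX × VY) × Fin (3 * k)))
    (hD : IsDomSet (boxProd (boxProd X Y) (pathGraph (3 * k))) D)
    (hDmin : D.ncard = domNum (boxProd (boxProd X Y) (pathGraph (3 * k)))) :
    Set.ncard {p : Fin (domNum X) × VY × Fin (3 * k) |
        MaroonCell Y D (π p.1) p.2.1 p.2.2} ≤
      2 * domNum (boxProd (boxProd X Y) (pathGraph (3 * k))) := by
  classical
  set S := {p : Fin (domNum X) × VY × Fin (3 * k) |
      MaroonCell Y D (π p.1) p.2.1 p.2.2} with hS
  have key : ∀ p ∈ S, ∃ a c, a ∈ π p.1 ∧ (pathGraph (3 * k)).Adj c p.2.2 ∧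
      ((a, p.2.1), c) ∈ D := by
    rintro ⟨i, y, z⟩ hp
    obtain ⟨-, ⟨v, hv, hYZ⟩, hnoY⟩ := hp
    rcases hYZ with hY | hZ
    · exact absurd hY (hnoY v hv)
    · obtain ⟨c, hc, hcd⟩ := hZ
      obtain ⟨hv1, hv2, hv3⟩ := hv
      refine ⟨v.1.1, c, hv1, ?_, ?_⟩
      · rwa [hv3] at hc
      · rwa [hv2] at hcd
  rcases S.eq_empty_or_nonempty with hSe | ⟨p0, hp0⟩
  · rw [hSe]; simp
  obtain ⟨a0, c0, -, -, -⟩ := key p0 hp0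
  haveI : Nonempty VX := ⟨a0⟩
  haveI : Nonempty (Fin (3 * k)) := ⟨c0⟩
  choose! a c ha hadj hd using key
  set f : (Fin (domNum X) × VY × Fin (3 * k)) → ((VX × VY) × Fin (3 * k)) × Bool :=
    fun p => (((a p, p.2.1), c p), decide ((c p).val + 1 = p.2.2.val)) with hf
  have hmaps : ∀ p ∈ S, f p ∈ D ×ˢ (Set.univ : Set Bool) := fun p hp =>
    ⟨hd p hp, trivial⟩
  have hinj : Set.InjOn f S := by
    rintro p hp q hq hfeq
    have h1 : a p = a q := congrArg (fun x => x.1.1.1) hfeq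
    have h2 : p.2.1 = q.2.1 := congrArg (fun x => x.1.1.2) hfeq
    have h3 : c p = c q := congrArg (fun x => x.1.2) hfeq
    have h4 : (decide ((c p).val + 1 = p.2.2.val)) =
        (decide ((c q).val + 1 = q.2.2.val)) := congrArg (fun x => x.2) hfeq
    have h5 : p.1 = q.1 := by
      by_contra hne
      exact (hπ_disj hne).ne_of_mem (ha p hp) (h1 ▸ ha q hq) rfl
    have hzp := pathGraph_adj.mp (hadj p hp)
    have hzq := pathGraph_adj.mp (hadj q hq)
    rw [h3] at hzp
    rw [h3] at h4
    simp only [decide_eq_decide] at h4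
    have h6 : p.2.2 = q.2.2 := Fin.ext (by omega)
    exact Prod.ext h5 (Prod.ext h2 h6)
  have hle := Set.ncard_le_ncard_of_injOn f hmaps hinj (Set.toFinite _)
  have hcard : (D ×ˢ (Set.univ : Set Bool)).ncard = 2 * D.ncard := by
    rw [Set.ncard_eq_toFinset_card', Set.toFinset_prod, Finset.card_product,
      Set.toFinset_univ, Finset.card_univ, Fintype.card_bool,
      Set.ncard_eq_toFinset_card', Nat.mul_comm]
  rw [hcard, hDmin] at hle
  exact hle
end

section
/- In a path of n = 3k cells where maroon cells obey the constraints that no three consecutive cells are maroon, the two endpoints' first (and last) two cells are not both maroon, and every maroon cell has a neighbor that is blue/green/yellow/orange, the maximum possible number of maroon cells is 2k, attained when the cells follow the repeating pattern (maroon, blue-or-green, maroon) and the number of blue/green cells is k. For n = 3k+1 the maximum is 2k, and for n = 3k+2 the maximum is 2k+1. -/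
/-- A sequence of `n` cells over the alphabet `Fin 3` (`0` = maroon, `1` = supported
(blue/green/yellow/orange), `2` = other) obeying the constraints: no three consecutive
maroon cells, the first two cells not both maroon, the last two cells not both maroon,
and every maroon cell has a neighbour which is supported. -/
def ValidSeq (n : ℕ) (f : ℕ → Fin 3) : Prop :=
  (∀ l, l + 2 < n → ¬ (f l = 0 ∧ f (l + 1) = 0 ∧ f (l + 2) = 0)) ∧
  (2 ≤ n → ¬ (f 0 = 0 ∧ f 1 = 0)) ∧
  (2 ≤ n → ¬ (f (n - 2) = 0 ∧ f (n - 1) = 0)) ∧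
  (∀ l, l < n → f l = 0 →
    (1 ≤ l ∧ f (l - 1) = 1) ∨ (l + 1 < n ∧ f (l + 1) = 1))

/-- The number of maroon cells among the first `n` entries. -/
def maroonCount (n : ℕ) (f : ℕ → Fin 3) : ℕ :=
  ((Finset.range n).filter fun l => f l = 0).card

/-!
Cutting the path into blocks of three consecutive cells, each block holds at most two maroon
cells; a leftover pair at either end holds at most one, by the end conditions, and a path of
a single cell holds none, since that cell has no neighbour to support it. The periodic
patterns in which every third cell is supported and all others are maroon, with the phase
chosen to suit `n mod 3`, attain these bounds.
-/

open Nat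

section Count

variable {p : ℕ → Prop} [DecidablePred p]

lemma count_two_le_one (h : ¬ (p 0 ∧ p 1)) : count p 2 ≤ 1 := by
  simp only [count_succ, count_zero]
  split_ifs <;> simp_all

lemma count_three_le_two (h : ¬ (p 0 ∧ p 1 ∧ p 2)) : count p 3 ≤ 2 := by
  simp only [count_succ, count_zero]
  split_ifs <;> simp_all

lemma count_three_mul_le (j : ℕ)
    (h : ∀ l, l + 2 < 3 * j → ¬ (p l ∧ p (l + 1) ∧ p (l + 2))) :
    count p (3 * j) ≤ 2 * j := by
  induction j with
  | zero => simp
  | succ j ih =>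
    have hblock : count (fun l => p (3 * j + l)) 3 ≤ 2 :=
      count_three_le_two (h (3 * j) (by omega))
    have hprefix := ih fun l hl => h l (by omega)
    rw [show 3 * (j + 1) = 3 * j + 3 by ring, count_add]
    omega

end Count

lemma maroonCount_eq_count (n : ℕ) (f : ℕ → Fin 3) :
    maroonCount n f = count (fun l => f l = 0) n :=
  (count_eq_card_filter_range _ n).symm

namespace ValidSeq

variable {k : ℕ} {f : ℕ → Fin 3}

lemma maroonCount_three_mul_le (hf : ValidSeq (3 * k) f) :
    maroonCount (3 * k) f ≤ 2 * k := by
  rw [maroonCount_eq_count]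
  exact count_three_mul_le k hf.1

lemma maroonCount_three_mul_add_two_le (hf : ValidSeq (3 * k + 2) f) :
    maroonCount (3 * k + 2) f ≤ 2 * k + 1 := by
  have hfront := count_two_le_one (p := fun l => f l = 0) (hf.2.1 (by omega))
  have hblocks := count_three_mul_le (p := fun l => f (2 + l) = 0) k
    fun l hl => hf.1 (2 + l) (by omega)
  rw [maroonCount_eq_count, show 3 * k + 2 = 2 + 3 * k by ring, count_add]
  omega

lemma maroonCount_three_mul_add_one_le (hf : ValidSeq (3 * k + 1) f) :
    maroonCount (3 * k + 1) f ≤ 2 * k := by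
  rcases k with _ | k
  · have hcell : f 0 ≠ 0 := fun h0 => by
      rcases hf.2.2.2 0 (by omega) h0 with ⟨h, -⟩ | ⟨h, -⟩ <;> omega
    simp [maroonCount_eq_count, count_one, hcell]
  · have hfront := count_two_le_one (p := fun l => f l = 0) (hf.2.1 (by omega))
    have hblocks := count_three_mul_le (p := fun l => f (2 + l) = 0) k
      fun l hl => hf.1 (2 + l) (by omega)
    have hlast := hf.2.2.1 (by omega)
    rw [show 3 * (k + 1) + 1 - 2 = 2 + 3 * k + 0 by omega,
      show 3 * (k + 1) + 1 - 1 = 2 + 3 * k + 1 by omega] at hlast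
    have hback := count_two_le_one (p := fun l => f (2 + 3 * k + l) = 0) hlast
    rw [maroonCount_eq_count, show 3 * (k + 1) + 1 = 2 + 3 * k + 2 by ring, count_add,
      count_add]
    omega

end ValidSeq

def periodicSeq (r l : ℕ) : Fin 3 := if l % 3 = r then 1 else 0

lemma periodicSeq_eq_zero_iff {r l : ℕ} : periodicSeq r l = 0 ↔ l % 3 ≠ r := by
  unfold periodicSeq
  split_ifs <;> simp_all

lemma periodicSeq_eq_one_iff {r l : ℕ} : periodicSeq r l = 1 ↔ l % 3 = r := by
  unfold periodicSeq
  split_ifs <;> simp_all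

lemma validSeq_periodicSeq {r n : ℕ} (hr : r ≤ 1) (hn : n % 3 ≠ r) :
    ValidSeq n (periodicSeq r) := by
  simp only [ValidSeq, periodicSeq_eq_zero_iff, periodicSeq_eq_one_iff]
  refine ⟨fun l _ => ?_, fun _ => ?_, fun _ => ?_, fun l hl _ => ?_⟩ <;> omega

lemma maroonCount_periodicSeq_add_three {r : ℕ} (hr : r < 3) (n : ℕ) :
    maroonCount (n + 3) (periodicSeq r) = maroonCount n (periodicSeq r) + 2 := by
  simp only [maroonCount_eq_count, count_succ, periodicSeq_eq_zero_iff]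
  split_ifs <;> omega

lemma maroonCount_periodicSeq_three_mul_add {r : ℕ} (hr : r < 3) (k s : ℕ) :
    maroonCount (3 * k + s) (periodicSeq r) = 2 * k + maroonCount s (periodicSeq r) := by
  induction k with
  | zero => simp
  | succ k ih =>
    rw [show 3 * (k + 1) + s = 3 * k + s + 3 by ring,
      maroonCount_periodicSeq_add_three hr, ih]
    ring

/-- The maximum number of maroon cells in a valid sequence of length 3k is 2k,
of length 3k+1 is 2k, and of length 3k+2 is 2k+1. -/
theorem stmt_14 (k : ℕ) :
    IsGreatest {m | ∃ f, ValidSeq (3 * k) f ∧ maroonCount (3 * k) f = m} (2 * k) ∧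
    IsGreatest {m | ∃ f, ValidSeq (3 * k + 1) f ∧ maroonCount (3 * k + 1) f = m} (2 * k) ∧
    IsGreatest {m | ∃ f, ValidSeq (3 * k + 2) f ∧ maroonCount (3 * k + 2) f = m} (2 * k + 1) := by
  refine ⟨⟨⟨periodicSeq 1, validSeq_periodicSeq le_rfl (by omega), ?_⟩, ?_⟩,
    ⟨⟨periodicSeq 0, validSeq_periodicSeq zero_le_one (by omega), ?_⟩, ?_⟩,
    ⟨⟨periodicSeq 0, validSeq_periodicSeq zero_le_one (by omega), ?_⟩, ?_⟩⟩
  · exact maroonCount_periodicSeq_three_mul_add (by omega) k 0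
  · rintro _ ⟨f, hf, rfl⟩
    exact hf.maroonCount_three_mul_le
  · rw [maroonCount_periodicSeq_three_mul_add (by omega)]
    rfl
  · rintro _ ⟨f, hf, rfl⟩
    exact hf.maroonCount_three_mul_add_one_le
  · rw [maroonCount_periodicSeq_three_mul_add (by omega)]
    rfl
  · rintro _ ⟨f, hf, rfl⟩
    exact hf.maroonCount_three_mul_add_two_le
end

section
/- Let X, Y, Z be graphs with Z having vertex set of size n, and let D be a dominating set of X □ Y □ Z. With the cell coloring of the paper, the counts satisfy b' + g' + y' + o' + r' + p' + m' + w' = γ(X)·|V(Y)|·|V(Z)| (the total number of cells), and b + g + y + o + g' + y' + o' + p' + m' + w' ≥ γ(X)·|V(Y)|·|V(Z)|; consequently b' + r' ≤ b + g + y + o = |D|. -/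
open SimpleGraph

section Colors

variable {VX VY VZ : Type*} (Y : SimpleGraph VY) (Z : SimpleGraph VZ)
  (D : Set ((VX × VY) × VZ))

/-- No vertex of the cell c is Y-dominated. -/
def NoYDom (c : Set ((VX × VY) × VZ)) : Prop := ∀ v ∈ c, ¬ YDominated Y D v

/-- No vertex of the cell c is Z-dominated. -/
def NoZDom (c : Set ((VX × VY) × VZ)) : Prop := ∀ v ∈ c, ¬ ZDominated Z D v

def BlueC (c : Set ((VX × VY) × VZ)) : Prop :=
  (D ∩ c).Nonempty ∧ NoYDom Y D c ∧ NoZDom Z D c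

def GreenC (c : Set ((VX × VY) × VZ)) : Prop :=
  (D ∩ c).Nonempty ∧ ¬ BlueC Y Z D c ∧ NoZDom Z D c

def YellowC (c : Set ((VX × VY) × VZ)) : Prop :=
  (D ∩ c).Nonempty ∧ ¬ BlueC Y Z D c ∧ NoYDom Y D c

def OrangeC (c : Set ((VX × VY) × VZ)) : Prop :=
  (D ∩ c).Nonempty ∧ ¬ BlueC Y Z D c ∧ ¬ GreenC Y Z D c ∧ ¬ YellowC Y Z D c

def RedC (c : Set ((VX × VY) × VZ)) : Prop :=
  ¬ (D ∩ c).Nonempty ∧ NoYDom Y D c ∧ NoZDom Z D c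

def PinkC (c : Set ((VX × VY) × VZ)) : Prop :=
  ¬ (D ∩ c).Nonempty ∧ ¬ RedC Y Z D c ∧ NoZDom Z D c

def MaroonC (c : Set ((VX × VY) × VZ)) : Prop :=
  ¬ (D ∩ c).Nonempty ∧ ¬ RedC Y Z D c ∧ NoYDom Y D c

def WhiteC (c : Set ((VX × VY) × VZ)) : Prop :=
  ¬ BlueC Y Z D c ∧ ¬ GreenC Y Z D c ∧ ¬ YellowC Y Z D c ∧ ¬ OrangeC Y Z D c ∧
  ¬ RedC Y Z D c ∧ ¬ PinkC Y Z D c ∧ ¬ MaroonC Y Z D c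


/-- The number of cells of a given colour P. -/
noncomputable def cellCount {VX VY VZ : Type*} [Fintype VX]
    (X : SimpleGraph VX) (π : Fin (domNum X) → Set VX)
    (P : Set ((VX × VY) × VZ) → Prop) : ℕ :=
  Set.ncard {p : Fin (domNum X) × VY × VZ | P (cell (π p.1) p.2.1 p.2.2)}

/-- The number of vertices of D lying in a cell of a given colour P. -/
noncomputable def vertexCount {VX VY VZ : Type*} [Fintype VX]
    (X : SimpleGraph VX) (π : Fin (domNum X) → Set VX)
    (D : Set ((VX × VY) × VZ)) (P : Set ((VX × VY) × VZ) → Prop) : ℕ :=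
  Set.ncard {v | v ∈ D ∧ ∃ p : Fin (domNum X) × VY × VZ,
    v ∈ cell (π p.1) p.2.1 p.2.2 ∧ P (cell (π p.1) p.2.1 p.2.2)}

end Colors


section AuxLemmas

open scoped Classical

lemma ncard_setOf_eq_sum {α : Type*} [Fintype α] (P : α → Prop) :
    Set.ncard {p | P p} = ∑ p, if P p then 1 else 0 := by
  rw [Set.ncard_eq_toFinset_card', Set.toFinset_setOf, Finset.card_filter]

variable {VX VY VZ : Type*} (Y : SimpleGraph VY) (Z : SimpleGraph VZ)
  (D : Set ((VX × VY) × VZ))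

lemma eight_colors (c : Set ((VX × VY) × VZ)) :
    ((if BlueC Y Z D c then 1 else 0) + (if GreenC Y Z D c then 1 else 0) +
     (if YellowC Y Z D c then 1 else 0) + (if OrangeC Y Z D c then 1 else 0) +
     (if RedC Y Z D c then 1 else 0) + (if PinkC Y Z D c then 1 else 0) +
     (if MaroonC Y Z D c then 1 else 0) + (if WhiteC Y Z D c then 1 else 0) : ℕ) = 1 := by
  by_cases hn : (D ∩ c).Nonempty <;> by_cases hy : NoYDom Y D c <;>
    by_cases hz : NoZDom Z D c <;>
    simp [BlueC, GreenC, YellowC, OrangeC, RedC, PinkC, MaroonC, WhiteC, hn, hy, hz]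

lemma four_colors {c : Set ((VX × VY) × VZ)} (hn : (D ∩ c).Nonempty) :
    ((if BlueC Y Z D c then 1 else 0) + (if GreenC Y Z D c then 1 else 0) +
     (if YellowC Y Z D c then 1 else 0) + (if OrangeC Y Z D c then 1 else 0) : ℕ) = 1 := by
  by_cases hy : NoYDom Y D c <;> by_cases hz : NoZDom Z D c <;>
    simp [BlueC, GreenC, YellowC, OrangeC, hn, hy, hz]

end AuxLemmas

/-- The counting identities of the paper: the eight colours partition the cells, the
inequality (1), and the consequence b′ + r′ ≤ b + g + y + o = |D|. -/
theorem stmt_18 {VX VY VZ : Type*} [Fintype VX] [Fintype VY] [Fintype VZ]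
    (X : SimpleGraph VX) (Y : SimpleGraph VY) (Z : SimpleGraph VZ)
    (u : Fin (domNum X) → VX) (hu_inj : Function.Injective u)
    (hu_dom : IsDomSet X (Set.range u))
    (π : Fin (domNum X) → Set VX)
    (hπ_mem : ∀ i, u i ∈ π i)
    (hπ_sub : ∀ i, π i ⊆ insert (u i) (X.neighborSet (u i)))
    (hπ_disj : Pairwise fun i j => Disjoint (π i) (π j))
    (hπ_cover : ∀ a, ∃ i, a ∈ π i)
    (D : Set ((VX × VY) × VZ)) (hD : IsDomSet (SimpleGraph.boxProd (SimpleGraph.boxProd X Y) Z) D) :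
    cellCount X π (BlueC Y Z D) + cellCount X π (GreenC Y Z D) +
        cellCount X π (YellowC Y Z D) + cellCount X π (OrangeC Y Z D) +
        cellCount X π (RedC Y Z D) + cellCount X π (PinkC Y Z D) +
        cellCount X π (MaroonC Y Z D) + cellCount X π (WhiteC Y Z D) =
      domNum X * Fintype.card VY * Fintype.card VZ ∧
    vertexCount X π D (BlueC Y Z D) + vertexCount X π D (GreenC Y Z D) +
        vertexCount X π D (YellowC Y Z D) + vertexCount X π D (OrangeC Y Z D) +
        cellCount X π (GreenC Y Z D) + cellCount X π (YellowC Y Z D) +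
        cellCount X π (OrangeC Y Z D) + cellCount X π (PinkC Y Z D) +
        cellCount X π (MaroonC Y Z D) + cellCount X π (WhiteC Y Z D) ≥
      domNum X * Fintype.card VY * Fintype.card VZ ∧
    cellCount X π (BlueC Y Z D) + cellCount X π (RedC Y Z D) ≤
      vertexCount X π D (BlueC Y Z D) + vertexCount X π D (GreenC Y Z D) +
        vertexCount X π D (YellowC Y Z D) + vertexCount X π D (OrangeC Y Z D) ∧
    vertexCount X π D (BlueC Y Z D) + vertexCount X π D (GreenC Y Z D) +
        vertexCount X π D (YellowC Y Z D) + vertexCount X π D (OrangeC Y Z D) =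
      D.ncard := by
  classical
  choose idx hidx using hπ_cover
  -- unique cell containing a vertex
  have huniq : ∀ (v : (VX × VY) × VZ) (p : Fin (domNum X) × VY × VZ),
      v ∈ cell (π p.1) p.2.1 p.2.2 →
      cell (π p.1) p.2.1 p.2.2 = cell (π (idx v.1.1)) v.1.2 v.2 := by
    rintro v ⟨i, y, z⟩ ⟨h1, h2, h3⟩
    have hi : i = idx v.1.1 := by
      by_contra hne
      exact Set.disjoint_left.mp (hπ_disj hne) h1 (hidx v.1.1)
    dsimp only at h1 h2 h3
    rw [hi, ← h2, ← h3]
  have hcellmem : ∀ v : (VX × VY) × VZ, v ∈ cell (π (idx v.1.1)) v.1.2 v.2 :=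
    fun v => ⟨hidx _, rfl, rfl⟩
  have hex : ∀ (v : (VX × VY) × VZ) (P : Set ((VX × VY) × VZ) → Prop),
      (∃ p : Fin (domNum X) × VY × VZ,
        v ∈ cell (π p.1) p.2.1 p.2.2 ∧ P (cell (π p.1) p.2.1 p.2.2)) ↔
      P (cell (π (idx v.1.1)) v.1.2 v.2) := by
    intro v P
    constructor
    · rintro ⟨p, hp, hP⟩
      rwa [huniq v p hp] at hP
    · intro h
      exact ⟨(idx v.1.1, v.1.2, v.2), hcellmem v, h⟩
  -- Part 1
  have part1 : cellCount X π (BlueC Y Z D) + cellCount X π (GreenC Y Z D) +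
      cellCount X π (YellowC Y Z D) + cellCount X π (OrangeC Y Z D) +
      cellCount X π (RedC Y Z D) + cellCount X π (PinkC Y Z D) +
      cellCount X π (MaroonC Y Z D) + cellCount X π (WhiteC Y Z D) =
      domNum X * Fintype.card VY * Fintype.card VZ := by
    simp only [cellCount, ncard_setOf_eq_sum, ← Finset.sum_add_distrib]
    calc (∑ p : Fin (domNum X) × VY × VZ,
          ((if BlueC Y Z D (cell (π p.1) p.2.1 p.2.2) then 1 else 0) +
           (if GreenC Y Z D (cell (π p.1) p.2.1 p.2.2) then 1 else 0) +
           (if YellowC Y Z D (cell (π p.1) p.2.1 p.2.2) then 1 else 0) +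
           (if OrangeC Y Z D (cell (π p.1) p.2.1 p.2.2) then 1 else 0) +
           (if RedC Y Z D (cell (π p.1) p.2.1 p.2.2) then 1 else 0) +
           (if PinkC Y Z D (cell (π p.1) p.2.1 p.2.2) then 1 else 0) +
           (if MaroonC Y Z D (cell (π p.1) p.2.1 p.2.2) then 1 else 0) +
           (if WhiteC Y Z D (cell (π p.1) p.2.1 p.2.2) then 1 else 0)))
        = ∑ _p : Fin (domNum X) × VY × VZ, 1 :=
          Finset.sum_congr rfl fun p _ => eight_colors Y Z D _
      _ = domNum X * Fintype.card VY * Fintype.card VZ := by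
          simp [Finset.card_univ, mul_assoc]
  -- Part 4
  have part4 : vertexCount X π D (BlueC Y Z D) + vertexCount X π D (GreenC Y Z D) +
      vertexCount X π D (YellowC Y Z D) + vertexCount X π D (OrangeC Y Z D) = D.ncard := by
    simp only [vertexCount, ncard_setOf_eq_sum, ← Finset.sum_add_distrib]
    have hD' : D.ncard = ∑ v : (VX × VY) × VZ, if v ∈ D then 1 else 0 :=
      ncard_setOf_eq_sum _
    rw [hD']
    refine Finset.sum_congr rfl fun v _ => ?_
    by_cases hv : v ∈ D
    · simp only [hv, true_and, if_true, hex]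
      exact four_colors Y Z D ⟨v, hv, hcellmem v⟩
    · simp [hv]
  -- Part 3 : per-column lemma
  have hcol : ∀ q : VY × VZ,
      Set.ncard {i | BlueC Y Z D (cell (π i) q.1 q.2)} +
      Set.ncard {i | RedC Y Z D (cell (π i) q.1 q.2)} ≤
      Set.ncard {a | ((a, q.1), q.2) ∈ D} := by
    intro q
    set A : Set VX := {a | ((a, q.1), q.2) ∈ D} with hA
    set T : Set (Fin (domNum X)) :=
      {i | ¬ BlueC Y Z D (cell (π i) q.1 q.2) ∧ ¬ RedC Y Z D (cell (π i) q.1 q.2)} with hT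
    have hdom : IsDomSet X (A ∪ u '' T) := by
      intro a
      by_cases hiT : idx a ∈ T
      · rcases hπ_sub (idx a) (hidx a) with h | h
        · exact Or.inl (Or.inr ⟨idx a, hiT, h.symm⟩)
        · exact Or.inr ⟨u (idx a), Or.inr ⟨idx a, hiT, rfl⟩, h⟩
      · have hBR : BlueC Y Z D (cell (π (idx a)) q.1 q.2) ∨ RedC Y Z D (cell (π (idx a)) q.1 q.2) := by
          by_contra hc
          push_neg at hc
          exact hiT ⟨hc.1, hc.2⟩
        have hnYZ : NoYDom Y D (cell (π (idx a)) q.1 q.2) ∧ NoZDom Z D (cell (π (idx a)) q.1 q.2) := by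
          rcases hBR with h | h
          · exact ⟨h.2.1, h.2.2⟩
          · exact ⟨h.2.1, h.2.2⟩
        have hv : ((a, q.1), q.2) ∈ cell (π (idx a)) q.1 q.2 := ⟨hidx a, rfl, rfl⟩
        rcases hD ((a, q.1), q.2) with hvD | ⟨w, hwD, hadj⟩
        · exact Or.inl (Or.inl hvD)
        · obtain ⟨⟨wa, wb⟩, wc⟩ := w
          rw [boxProd_adj] at hadj
          rcases hadj with ⟨hXY, hZ⟩ | ⟨hZ, hXY⟩
          · rw [boxProd_adj] at hXY
            rcases hXY with ⟨hX, hYeq⟩ | ⟨hY, hXeq⟩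
            · -- X-adjacent dominator
              simp only at hX hYeq hZ
              subst hYeq; subst hZ
              exact Or.inr ⟨wa, Or.inl hwD, hX⟩
            · -- Y-dominated : contradiction
              simp only at hY hXeq hZ
              subst hXeq; subst hZ
              exact absurd ⟨wb, hY, hwD⟩ (hnYZ.1 _ hv)
          · -- Z-dominated : contradiction
            simp only at hZ hXY
            have hwa : wa = a := congrArg Prod.fst hXY
            have hwb : wb = q.1 := congrArg Prod.snd hXY
            subst hwa; subst hwb
            exact absurd ⟨wc, hZ, hwD⟩ (hnYZ.2 _ hv)
    have hle : domNum X ≤ (A ∪ u '' T).ncard := by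
      apply Nat.sInf_le
      refine ⟨(A ∪ u '' T).toFinset, (Set.ncard_eq_toFinset_card' _).symm, ?_⟩
      rwa [Set.coe_toFinset]
    have h1 : (A ∪ u '' T).ncard ≤ A.ncard + T.ncard := by
      calc (A ∪ u '' T).ncard ≤ A.ncard + (u '' T).ncard := Set.ncard_union_le _ _
        _ = A.ncard + T.ncard := by rw [Set.ncard_image_of_injective _ hu_inj]
    have h2 : Set.ncard {i | BlueC Y Z D (cell (π i) q.1 q.2)} +
        Set.ncard {i | RedC Y Z D (cell (π i) q.1 q.2)} + T.ncard = domNum X := by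
      have hTn : T.ncard = Set.ncard {i | ¬ BlueC Y Z D (cell (π i) q.1 q.2) ∧
          ¬ RedC Y Z D (cell (π i) q.1 q.2)} := by rw [hT]
      rw [hTn]
      simp only [ncard_setOf_eq_sum, ← Finset.sum_add_distrib]
      trans (∑ _i : Fin (domNum X), (1 : ℕ))
      · refine Finset.sum_congr rfl fun i _ => ?_
        by_cases hB : BlueC Y Z D (cell (π i) q.1 q.2) <;>
          by_cases hR : RedC Y Z D (cell (π i) q.1 q.2)
        · exact absurd hB.1 hR.1
        all_goals simp [hB, hR]
      · simp
    omega
  -- reorganize counts as column sums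
  have hswap : ∀ g : Fin (domNum X) × VY × VZ → ℕ,
      ∑ p : Fin (domNum X) × VY × VZ, g p = ∑ q : VY × VZ, ∑ i, g (i, q) := by
    intro g
    rw [Fintype.sum_prod_type, Finset.sum_comm]
  have hcc : ∀ P : Set ((VX × VY) × VZ) → Prop,
      cellCount X π P = ∑ q : VY × VZ, Set.ncard {i | P (cell (π i) q.1 q.2)} := by
    intro P
    rw [cellCount, ncard_setOf_eq_sum, hswap]
    exact Finset.sum_congr rfl fun q _ => (ncard_setOf_eq_sum _).symm
  have hDcol : D.ncard = ∑ q : VY × VZ, Set.ncard {a | ((a, q.1), q.2) ∈ D} := by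
    have hbij : Function.Bijective
        (fun w : (VY × VZ) × VX => (((w.2, w.1.1), w.1.2) : (VX × VY) × VZ)) := by
      constructor
      · rintro ⟨⟨y, z⟩, a⟩ ⟨⟨y', z'⟩, a'⟩ h
        simp_all [Prod.ext_iff]
      · rintro ⟨⟨a, y⟩, z⟩
        exact ⟨((y, z), a), rfl⟩
    have hstart : D.ncard = ∑ v : (VX × VY) × VZ, if v ∈ D then 1 else 0 :=
      ncard_setOf_eq_sum _
    rw [hstart, ← Fintype.sum_bijective _ hbij
        (fun w : (VY × VZ) × VX => if (((w.2, w.1.1), w.1.2) : (VX × VY) × VZ) ∈ D then 1 else 0)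
        (fun v => if v ∈ D then 1 else 0) (fun w => rfl),
      Fintype.sum_prod_type]
    exact Finset.sum_congr rfl fun q _ => (ncard_setOf_eq_sum _).symm
  have part3 : cellCount X π (BlueC Y Z D) + cellCount X π (RedC Y Z D) ≤ D.ncard := by
    rw [hcc, hcc, hDcol, ← Finset.sum_add_distrib]
    exact Finset.sum_le_sum fun q _ => hcol q
  refine ⟨part1, ?_, ?_, part4⟩
  · omega
  · omega
end
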